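/- Let Γ be a group, n ≥ 1, and d_n ∈ M_{k_{n+1}×k_n}(ℝΓ). Let ψ : M_{k_n}(ℝΓ) → ℝ be a positive hermitian linear functional which vanishes on im D_n = {d_n* a d_n : a ∈ M_{k_{n+1}}(ℝΓ)}. Then there exist a real Hilbert space H, a unitary representation π : Γ → U(H), and a vector z ∈ H^{k_n} such that π(d_n)z = 0 (i.e. z is an n-cocycle), z is cyclic (π(M_{k_n}(ℝΓ))z is dense in H^{k_n}), and ψ(a) = ⟨π(a)z, z⟩ for every a ∈ M_{k_n}(ℝΓ). -/

import Mathlib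

open scoped BigOperators
noncomputable section

universe u v w

/-- The star operation on the real group algebra, determined by `γ ↦ γ⁻¹`. -/
def rgStar {G : Type u} [Group G] (x : MonoidAlgebra ℝ G) : MonoidAlgebra ℝ G :=
  MonoidAlgebra.mapDomain (fun g : G => g⁻¹) x

/-- The adjoint of a matrix over the real group algebra:
transpose and apply `rgStar` entrywise. -/
def adjM {G : Type u} [Group G] {m n : Type*}
    (a : Matrix m n (MonoidAlgebra ℝ G)) : Matrix n m (MonoidAlgebra ℝ G) :=
  Matrix.of fun i j => rgStar (a j i)

/-- A square matrix over the real group algebra is a sum of hermitian squares. -/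
def IsSOS {G : Type u} [Group G] {p : Type*} [Fintype p]
    (x : Matrix p p (MonoidAlgebra ℝ G)) : Prop :=
  ∃ (m : ℕ) (a : Fin m → Matrix p p (MonoidAlgebra ℝ G)),
    x = ∑ i, adjM (a i) * a i

/-- A unitary representation of `G` on a real Hilbert space. -/
structure URep (G : Type u) [Group G] : Type (max u (v + 1)) where
  H : Type v
  [normed : NormedAddCommGroup H]
  [ips : InnerProductSpace ℝ H]
  [complete : CompleteSpace H]
  π : G →* (H →L[ℝ] H)
  isometric : ∀ (γ : G) (x : H), ‖π γ x‖ = ‖x‖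

attribute [instance] URep.normed URep.ips URep.complete

/-- The extension of a unitary representation to the real group algebra. -/
noncomputable def URep.alg {G : Type u} [Group G] (ρ : URep.{u, v} G) :
    MonoidAlgebra ℝ G →ₐ[ℝ] (ρ.H →L[ℝ] ρ.H) :=
  MonoidAlgebra.lift ℝ (ρ.H →L[ℝ] ρ.H) G ρ.π

/-- The entrywise application of a unitary representation to a matrix over the
real group algebra, acting on tuples of vectors. -/
noncomputable def URep.mat {G : Type u} [Group G] (ρ : URep.{u, v} G)
    {p q : Type*} [Fintype q] (a : Matrix p q (MonoidAlgebra ℝ G))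
    (z : q → ρ.H) : p → ρ.H :=
  fun i => ∑ j, ρ.alg (a i j) (z j)

/-- The inner product on a finite power of a real Hilbert space. -/
noncomputable def pInner {G : Type u} [Group G] (ρ : URep.{u, v} G)
    {p : Type*} [Fintype p] (x y : p → ρ.H) : ℝ :=
  ∑ i, inner ℝ (x i) (y i)

/-!
This is the GNS construction carried out on rows. The functional `φ` defines the semi-inner
product `⟨u, v⟩ = φ(u* v)` on the rows `ι → ℝΓ` of `M_ι(ℝΓ)`; it is positive because a row padded
with zero rows is a square matrix `U` with `⟨u, u⟩ = φ(U* U)`. Left multiplication by `Γ`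
preserves this form, so `Γ` acts isometrically on the Hilbert space completion. The rows `z_i` of
the identity matrix satisfy `π(a) z = (rows of a)`, which gives cyclicity and
`⟨π(a) z, z⟩ = φ(a* 1) = φ(a)`. Finally `∑ₗ ‖(d_n)ₗ‖² = φ(d_n* d_n) = 0`, so `π(d_n) z = 0`.
-/

open UniformSpace

section GroupAlgebraStar

variable {G : Type u} [Group G]

@[simp]
lemma rgStar_single (g : G) (r : ℝ) :
    rgStar (MonoidAlgebra.single g r) = MonoidAlgebra.single g⁻¹ r :=
  MonoidAlgebra.mapDomain_single

lemma rgStar_add (x y : MonoidAlgebra ℝ G) : rgStar (x + y) = rgStar x + rgStar y :=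
  MonoidAlgebra.mapDomain_add _ _ _

lemma rgStar_smul (r : ℝ) (x : MonoidAlgebra ℝ G) : rgStar (r • x) = r • rgStar x :=
  MonoidAlgebra.mapDomain_smul _ r x

lemma rgStar_mul (x y : MonoidAlgebra ℝ G) : rgStar (x * y) = rgStar y * rgStar x := by
  induction x using MonoidAlgebra.induction_linear with
  | zero => simp [rgStar]
  | add a b ha hb => rw [add_mul, rgStar_add, rgStar_add, ha, hb, mul_add]
  | single g r =>
    induction y using MonoidAlgebra.induction_linear with
    | zero => simp [rgStar]
    | add a b ha hb => rw [mul_add, rgStar_add, rgStar_add, ha, hb, add_mul]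
    | single h s => simp [MonoidAlgebra.single_mul_single, mul_comm r s]

lemma rgStar_rgStar (x : MonoidAlgebra ℝ G) : rgStar (rgStar x) = x := by
  induction x using MonoidAlgebra.induction_linear with
  | zero => simp [rgStar]
  | add a b ha hb => rw [rgStar_add, rgStar_add, ha, hb]
  | single g r => simp

lemma rgStar_single_one_mul_mul_single_one_mul (g : G) (x y : MonoidAlgebra ℝ G) :
    rgStar (MonoidAlgebra.single g 1 * x) * (MonoidAlgebra.single g 1 * y) = rgStar x * y := by
  rw [rgStar_mul, rgStar_single, mul_assoc, ← mul_assoc (MonoidAlgebra.single g⁻¹ 1),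
    MonoidAlgebra.single_mul_single, inv_mul_cancel, one_mul, ← MonoidAlgebra.one_def, one_mul]

lemma adjM_mul_eq_sum_vecMulVec {κ ι : Type*} [Fintype κ]
    (a b : Matrix κ ι (MonoidAlgebra ℝ G)) :
    adjM a * b = ∑ l, Matrix.vecMulVec (fun i => rgStar (a l i)) (b l) := by
  ext i j
  simp [Matrix.mul_apply, Matrix.sum_apply, adjM, Matrix.vecMulVec_apply]

end GroupAlgebraStar

section Completion

variable {G : Type u} [Group G] {E : Type v} [SeminormedAddCommGroup E] [InnerProductSpace ℝ E]

abbrev URep.ofIsometric (ρ : Representation ℝ G E) (hρ : ∀ g x, ‖ρ g x‖ = ‖x‖) :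
    URep.{u, v} G where
  H := Completion E
  π :=
    { toFun g := ((ρ g).mkContinuous 1 fun x => by simp [hρ]).completion
      map_one' := ContinuousLinearMap.ext <|
        Completion.ext' (by fun_prop) (by fun_prop) fun x => by simp
      map_mul' g h := ContinuousLinearMap.ext <|
        Completion.ext' (by fun_prop) (by fun_prop) fun x => by simp }
  isometric g x := by
    induction x using Completion.induction_on with
    | hp => exact isClosed_eq (by fun_prop) continuous_norm
    | ih x => simp [hρ]

variable (ρ : Representation ℝ G E) (hρ : ∀ g x, ‖ρ g x‖ = ‖x‖)

@[simp]
lemma URep.ofIsometric_π_coe (g : G) (x : E) :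
    (URep.ofIsometric ρ hρ).π g (x : Completion E) = (ρ g x : Completion E) :=
  ContinuousLinearMap.completion_apply_coe _ x

lemma URep.ofIsometric_alg_coe (a : MonoidAlgebra ℝ G) (x : E) :
    (URep.ofIsometric ρ hρ).alg a (x : Completion E) = (ρ.asAlgebraHom a x : Completion E) := by
  induction a using MonoidAlgebra.induction_linear with
  | zero => exact Completion.coe_zero.symm
  | add a b ha hb =>
    rw [map_add, add_apply, ha, hb, map_add, LinearMap.add_apply]
    exact (Completion.coe_add _ _).symm
  | single g r =>
    rw [URep.alg, MonoidAlgebra.lift_single, smul_apply, ofIsometric_π_coe,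
      Representation.asAlgebraHom_single, LinearMap.smul_apply]
    exact (Completion.coe_smul _ _).symm

end Completion

structure HermitianPositiveFunctional (G : Type u) [Group G] (ι : Type w) [Fintype ι] where
  toLinearMap : Matrix ι ι (MonoidAlgebra ℝ G) →ₗ[ℝ] ℝ
  map_adjM : ∀ a, toLinearMap (adjM a) = toLinearMap a
  nonneg_of_isSOS : ∀ x, IsSOS x → 0 ≤ toLinearMap x

namespace HermitianPositiveFunctional

variable {G : Type u} [Group G] {ι : Type w} [Fintype ι] (φ : HermitianPositiveFunctional G ι)

/-- The form `⟨u, v⟩ = φ(u* v)` on rows `u, v` of `M_ι(ℝΓ)`. -/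
def rowForm : (ι → MonoidAlgebra ℝ G) →ₗ[ℝ] (ι → MonoidAlgebra ℝ G) →ₗ[ℝ] ℝ :=
  LinearMap.mk₂ ℝ (fun u v => φ.toLinearMap (Matrix.vecMulVec (fun i => rgStar (u i)) v))
    (fun u u' v => by
      rw [← map_add, ← Matrix.add_vecMulVec]
      exact congr_arg _ (congr_arg₂ _ (funext fun i => rgStar_add _ _) rfl))
    (fun r u v => by
      rw [← map_smul, ← Matrix.smul_vecMulVec]
      exact congr_arg _ (congr_arg₂ _ (funext fun i => rgStar_smul _ _) rfl))
    (fun u v v' => by simp [Matrix.vecMulVec_add])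
    (fun r u v => by simp [Matrix.vecMulVec_smul])

lemma rowForm_apply (u v : ι → MonoidAlgebra ℝ G) :
    φ.rowForm u v = φ.toLinearMap (Matrix.vecMulVec (fun i => rgStar (u i)) v) := rfl

lemma sum_rowForm {κ : Type*} [Fintype κ] (a b : Matrix κ ι (MonoidAlgebra ℝ G)) :
    ∑ l, φ.rowForm (a l) (b l) = φ.toLinearMap (adjM a * b) := by
  simp [rowForm_apply, adjM_mul_eq_sum_vecMulVec]

lemma rowForm_comm (u v : ι → MonoidAlgebra ℝ G) : φ.rowForm u v = φ.rowForm v u := by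
  rw [rowForm_apply, rowForm_apply, ← φ.map_adjM]
  congr 1
  ext i j
  simp [adjM, Matrix.vecMulVec_apply, rgStar_mul, rgStar_rgStar]

lemma rowForm_self_nonneg [DecidableEq ι] (u : ι → MonoidAlgebra ℝ G) : 0 ≤ φ.rowForm u u := by
  cases isEmpty_or_nonempty ι with
  | inl _ => simp [rowForm_apply, Subsingleton.elim (Matrix.vecMulVec _ u) 0]
  | inr h =>
    obtain ⟨i₀⟩ := h
    let U : Matrix ι ι (MonoidAlgebra ℝ G) := Pi.single i₀ u
    have : φ.rowForm u u = φ.toLinearMap (adjM U * U) := by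
      rw [← sum_rowForm, Fintype.sum_eq_single i₀ fun l hl => by simp [U, hl]]
      simp [U]
    exact this ▸ φ.nonneg_of_isSOS _ ⟨1, ![U], by simp⟩

lemma rowForm_single_one_smul (g : G) (u v : ι → MonoidAlgebra ℝ G) :
    φ.rowForm (MonoidAlgebra.single g (1 : ℝ) • u) (MonoidAlgebra.single g (1 : ℝ) • v) =
      φ.rowForm u v := by
  rw [rowForm_apply, rowForm_apply]
  congr 1
  ext1 i j
  exact rgStar_single_one_mul_mul_single_one_mul g (u i) (v j)

/-- The rows `ι → ℝΓ`, as a pre-Hilbert space for the semi-inner product `φ.rowForm`. -/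
def RowSpace (_φ : HermitianPositiveFunctional G ι) : Type (max u w) := ι → MonoidAlgebra ℝ G

instance : AddCommGroup φ.RowSpace := inferInstanceAs (AddCommGroup (ι → MonoidAlgebra ℝ G))

instance : Module (MonoidAlgebra ℝ G) φ.RowSpace :=
  inferInstanceAs (Module (MonoidAlgebra ℝ G) (ι → MonoidAlgebra ℝ G))

instance : Module ℝ φ.RowSpace := inferInstanceAs (Module ℝ (ι → MonoidAlgebra ℝ G))

instance : IsScalarTower ℝ (MonoidAlgebra ℝ G) φ.RowSpace :=
  inferInstanceAs (IsScalarTower ℝ (MonoidAlgebra ℝ G) (ι → MonoidAlgebra ℝ G))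

def toRowSpace : (ι → MonoidAlgebra ℝ G) ≃ₗ[MonoidAlgebra ℝ G] φ.RowSpace := LinearEquiv.refl _ _

def gnsRep : Representation ℝ G φ.RowSpace := Representation.ofModule' φ.RowSpace

lemma gnsRep_asAlgebraHom_apply (a : MonoidAlgebra ℝ G) (v : φ.RowSpace) :
    φ.gnsRep.asAlgebraHom a v = a • v := by
  rw [gnsRep, Representation.ofModule', Representation.asAlgebraHom_def, Equiv.apply_symm_apply,
    Algebra.lsmul_coe]

variable [DecidableEq ι]

instance : PreInnerProductSpace.Core ℝ φ.RowSpace where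
  inner u v := φ.rowForm u v
  conj_inner_symm u v := φ.rowForm_comm v u
  re_inner_nonneg := φ.rowForm_self_nonneg
  add_left u u' v := LinearMap.map_add₂ _ u u' v
  smul_left u v r := LinearMap.map_smul₂ _ r u v

instance : SeminormedAddCommGroup φ.RowSpace :=
  InnerProductSpace.Core.toSeminormedAddCommGroup (𝕜 := ℝ)

instance : InnerProductSpace ℝ φ.RowSpace := InnerProductSpace.ofCore inferInstance

lemma inner_toRowSpace (u v : ι → MonoidAlgebra ℝ G) :
    inner ℝ (φ.toRowSpace u) (φ.toRowSpace v) = φ.rowForm u v := rfl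

lemma norm_gnsRep (g : G) (v : φ.RowSpace) : ‖φ.gnsRep g v‖ = ‖v‖ := by
  obtain ⟨u, rfl⟩ := φ.toRowSpace.surjective v
  rw [← Representation.asAlgebraHom_single_one, gnsRep_asAlgebraHom_apply, ← map_smul,
    norm_eq_sqrt_real_inner, norm_eq_sqrt_real_inner, inner_toRowSpace, inner_toRowSpace,
    rowForm_single_one_smul]

abbrev gnsURep : URep.{u, max u w} G := URep.ofIsometric φ.gnsRep φ.norm_gnsRep

lemma gnsURep_alg_coe (a : MonoidAlgebra ℝ G) (v : φ.RowSpace) :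
    φ.gnsURep.alg a (v : Completion φ.RowSpace) =
      ((a • v : φ.RowSpace) : Completion φ.RowSpace) := by
  rw [URep.ofIsometric_alg_coe, gnsRep_asAlgebraHom_apply]

def gnsVector (i : ι) : φ.gnsURep.H := (φ.toRowSpace (Pi.single i 1) : Completion φ.RowSpace)

lemma gnsURep_mat_gnsVector {κ : Type*} (a : Matrix κ ι (MonoidAlgebra ℝ G)) (k : κ) :
    φ.gnsURep.mat a φ.gnsVector k = (φ.toRowSpace (a k) : Completion φ.RowSpace) := by
  have hrow : ∑ j, a k j • (Pi.single j 1 : ι → MonoidAlgebra ℝ G) = a k := by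
    simp_rw [← Pi.single_smul', smul_eq_mul, mul_one]
    exact Finset.univ_sum_single (a k)
  calc φ.gnsURep.mat a φ.gnsVector k
      = ∑ j, Completion.toCompl (φ.toRowSpace (a k j • Pi.single j 1)) := by
        refine Finset.sum_congr rfl fun j _ => ?_
        rw [gnsVector, gnsURep_alg_coe, map_smul]
        rfl
    _ = _ := by rw [← map_sum, ← map_sum, hrow]; rfl

lemma gnsURep_mat_gnsVector_eq_zero {κ : Type*} [Fintype κ] (d : Matrix κ ι (MonoidAlgebra ℝ G))
    (hd : φ.toLinearMap (adjM d * d) = 0) : φ.gnsURep.mat d φ.gnsVector = 0 := by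
  funext k
  have hk : φ.rowForm (d k) (d k) = 0 :=
    (Finset.sum_eq_zero_iff_of_nonneg fun l _ => φ.rowForm_self_nonneg (d l)).1
      ((φ.sum_rowForm d d).trans hd) k (Finset.mem_univ k)
  rw [gnsURep_mat_gnsVector, Pi.zero_apply, ← norm_eq_zero, Completion.norm_coe,
    norm_eq_sqrt_real_inner, inner_toRowSpace, hk, Real.sqrt_zero]

lemma dense_setOf_gnsURep_mat_gnsVector :
    Dense {w : ι → φ.gnsURep.H | ∃ a : Matrix ι ι (MonoidAlgebra ℝ G),
      φ.gnsURep.mat a φ.gnsVector = w} := by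
  have hset : {w : ι → φ.gnsURep.H | ∃ a : Matrix ι ι (MonoidAlgebra ℝ G),
      φ.gnsURep.mat a φ.gnsVector = w} =
      Set.univ.pi fun _ => Set.range ((↑) : φ.RowSpace → Completion φ.RowSpace) := by
    ext w
    constructor
    · rintro ⟨a, rfl⟩ i -
      exact ⟨_, (φ.gnsURep_mat_gnsVector a i).symm⟩
    · intro hw
      choose v hv using fun i => hw i (Set.mem_univ i)
      exact ⟨Matrix.of fun i => φ.toRowSpace.symm (v i), funext fun i => by
        rw [gnsURep_mat_gnsVector]
        exact (congr_arg _ (φ.toRowSpace.apply_symm_apply (v i))).trans (hv i)⟩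
  rw [hset]
  exact dense_pi _ fun _ _ => Completion.denseRange_coe

lemma pInner_gnsURep_mat_gnsVector (a : Matrix ι ι (MonoidAlgebra ℝ G)) :
    pInner φ.gnsURep (φ.gnsURep.mat a φ.gnsVector) φ.gnsVector = φ.toLinearMap a := by
  have hone (i : ι) : (Pi.single i 1 : ι → MonoidAlgebra ℝ G) = (1 : Matrix ι ι _) i :=
    funext fun _ => Matrix.one_eq_pi_single.symm
  simp only [pInner, gnsURep_mat_gnsVector, gnsVector, Completion.inner_coe, inner_toRowSpace,
    hone]
  rw [sum_rowForm, Matrix.mul_one, φ.map_adjM]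

end HermitianPositiveFunctional

theorem stmt_7_general {G : Type u} [Group G] (kn knext : ℕ)
    (dn : Matrix (Fin knext) (Fin kn) (MonoidAlgebra ℝ G))
    (ψ : Matrix (Fin kn) (Fin kn) (MonoidAlgebra ℝ G) →ₗ[ℝ] ℝ)
    (hherm : ∀ a : Matrix (Fin kn) (Fin kn) (MonoidAlgebra ℝ G), ψ (adjM a) = ψ a)
    (hpos : ∀ x : Matrix (Fin kn) (Fin kn) (MonoidAlgebra ℝ G), IsSOS x → 0 ≤ ψ x)
    (hvan : ∀ a : Matrix (Fin knext) (Fin knext) (MonoidAlgebra ℝ G),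
      ψ (adjM dn * a * dn) = 0) :
    ∃ (ρ : URep.{u, u} G) (z : Fin kn → ρ.H),
      ρ.mat dn z = 0 ∧
      Dense {w : Fin kn → ρ.H |
        ∃ a : Matrix (Fin kn) (Fin kn) (MonoidAlgebra ℝ G), ρ.mat a z = w} ∧
      ∀ a : Matrix (Fin kn) (Fin kn) (MonoidAlgebra ℝ G),
        ψ a = pInner ρ (ρ.mat a z) z := by
  let φ : HermitianPositiveFunctional G (Fin kn) := ⟨ψ, hherm, hpos⟩
  have hcocycle : φ.toLinearMap (adjM dn * dn) = 0 := by simpa using hvan 1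
  exact ⟨φ.gnsURep, φ.gnsVector, φ.gnsURep_mat_gnsVector_eq_zero dn hcocycle,
    φ.dense_setOf_gnsURep_mat_gnsVector, fun a => (φ.pInner_gnsURep_mat_gnsVector a).symm⟩

/-- higher GNS, from functionals to cocycles: a positive hermitian
linear functional on `M_{k_n}(ℝΓ)` vanishing on `im D_n` is the matrix coefficient
of a unitary representation at a cyclic vector `z ∈ H^{k_n}` which is a cocycle
(`π(d_n) z = 0`). -/
theorem stmt_7 {G : Type u} [Group G] (n : ℕ) (hn : 1 ≤ n) (kn knext : ℕ)
    (dn : Matrix (Fin knext) (Fin kn) (MonoidAlgebra ℝ G))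
    (ψ : Matrix (Fin kn) (Fin kn) (MonoidAlgebra ℝ G) →ₗ[ℝ] ℝ)
    (hherm : ∀ a : Matrix (Fin kn) (Fin kn) (MonoidAlgebra ℝ G), ψ (adjM a) = ψ a)
    (hpos : ∀ x : Matrix (Fin kn) (Fin kn) (MonoidAlgebra ℝ G), IsSOS x → 0 ≤ ψ x)
    (hvan : ∀ a : Matrix (Fin knext) (Fin knext) (MonoidAlgebra ℝ G),
      ψ (adjM dn * a * dn) = 0) :
    ∃ (ρ : URep.{u, u} G) (z : Fin kn → ρ.H),
      ρ.mat dn z = 0 ∧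
      Dense {w : Fin kn → ρ.H |
        ∃ a : Matrix (Fin kn) (Fin kn) (MonoidAlgebra ℝ G), ρ.mat a z = w} ∧
      ∀ a : Matrix (Fin kn) (Fin kn) (MonoidAlgebra ℝ G),
        ψ a = pInner ρ (ρ.mat a z) z :=
  stmt_7_general kn knext dn ψ hherm hpos hvan
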